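/- arXiv:2605.18622 — 5 statements merged into one kernel-verified Lean document; each statement's English description precedes it below -/
import Mathlib

section
/- On a periodic chain of N = 2L sites (L ≥ 1), let a : ZMod L → ZMod 2 satisfy the hard-core constraint a(r)·a(r+1) = 0 for all r. Define the even-dimer configuration s : ZMod N → ZMod 2 by s(2r) = s(2r+1) = a(r). Then applying the even Rule-54 layer—replacing s(2r) by χ(s(2r−1), s(2r), s(2r+1)) at every even site simultaneously—yields the configuration s' with s'(2r) = a(r−1) and s'(2r+1) = a(r). -/
/-- The Rule-54 Boolean update. -/
def chi (x y z : ZMod 2) : ZMod 2 := x + y + z + x * z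

/-- Physical even site `2r` of the coarse-grained site `r`. -/
def evenSite (L : ℕ) (r : ZMod L) : ZMod (2 * L) := ((2 * r.val : ℕ) : ZMod (2 * L))

/-- Physical odd site `2r+1` of the coarse-grained site `r`. -/
def oddSite (L : ℕ) (r : ZMod L) : ZMod (2 * L) := ((2 * r.val + 1 : ℕ) : ZMod (2 * L))

lemma oddSite_sub_one (L : ℕ) (hL : 1 ≤ L) (r : ZMod L) :
    oddSite L (r - 1) = evenSite L r - 1 := by
  haveI : NeZero L := ⟨by omega⟩
  have h : (L : ℤ) ∣ (((r - 1).val : ℤ) - ((r.val : ℤ) - 1)) := by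
    have := (ZMod.intCast_zmod_eq_zero_iff_dvd (((r - 1).val : ℤ) - ((r.val : ℤ) - 1)) L).mpr
    apply (ZMod.intCast_zmod_eq_zero_iff_dvd _ L).mp
    push_cast
    simp [ZMod.natCast_val, ZMod.cast_id]
  have h2 : ((2 * L : ℕ) : ℤ) ∣ 2 * (((r - 1).val : ℤ) - ((r.val : ℤ) - 1)) := by
    push_cast
    exact mul_dvd_mul_left 2 h
  have h3 : ((2 * (((r - 1).val : ℤ) - ((r.val : ℤ) - 1)) : ℤ) : ZMod (2 * L)) = 0 :=
    (ZMod.intCast_zmod_eq_zero_iff_dvd _ _).mpr h2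
  unfold oddSite evenSite
  push_cast at h3 ⊢
  linear_combination h3

/-- Applying the even Rule-54 layer to an even-dimer hard-core configuration
yields the corresponding odd-dimer configuration. -/
theorem even_layer_on_even_dimer (L : ℕ) (hL : 1 ≤ L)
    (a : ZMod L → ZMod 2) (ha : ∀ r, a r * a (r + 1) = 0)
    (s : ZMod (2 * L) → ZMod 2)
    (hs : ∀ r : ZMod L, s (evenSite L r) = a r ∧ s (oddSite L r) = a r)
    (s' : ZMod (2 * L) → ZMod 2)
    (hs'even : ∀ r : ZMod L,
      s' (evenSite L r) = chi (s (evenSite L r - 1)) (s (evenSite L r)) (s (evenSite L r + 1)))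
    (hs'odd : ∀ r : ZMod L, s' (oddSite L r) = s (oddSite L r)) :
    ∀ r : ZMod L, s' (evenSite L r) = a (r - 1) ∧ s' (oddSite L r) = a r := by
  intro r
  have hplus : evenSite L r + 1 = oddSite L r := by
    unfold oddSite evenSite; push_cast; ring
  have hminus : evenSite L r - 1 = oddSite L (r - 1) := (oddSite_sub_one L hL r).symm
  constructor
  · rw [hs'even r, hminus, hplus, (hs r).1, (hs r).2, (hs (r-1)).2]
    have h0 : a (r - 1) * a r = 0 := by
      have := ha (r - 1); simpa using this
    unfold chi
    have h1 : a r + a r = 0 := CharTwo.add_self_eq_zero (a r)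
    linear_combination h1 + h0
  · rw [hs'odd r, (hs r).2]
end

section
/- On a periodic chain of N = 2L sites (L ≥ 1), let a : ZMod L → ZMod 2 satisfy a(r)·a(r+1) = 0 for all r, and let s be the configuration with s(2r) = a(r−1), s(2r+1) = a(r) (odd-dimer form). Then applying the odd Rule-54 layer—replacing s(2r+1) by χ(s(2r), s(2r+1), s(2r+2)) at every odd site—yields s'' with s''(2r) = s''(2r+1) = a(r−1). -/
/-- Applying the odd Rule-54 layer to an odd-dimer hard-core configuration
yields the translated even-dimer configuration. -/
theorem odd_layer_on_odd_dimer (L : ℕ) (hL : 1 ≤ L)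
    (a : ZMod L → ZMod 2) (ha : ∀ r, a r * a (r + 1) = 0)
    (s : ZMod (2 * L) → ZMod 2)
    (hs : ∀ r : ZMod L, s (evenSite L r) = a (r - 1) ∧ s (oddSite L r) = a r)
    (s'' : ZMod (2 * L) → ZMod 2)
    (hs''odd : ∀ r : ZMod L,
      s'' (oddSite L r) = chi (s (oddSite L r - 1)) (s (oddSite L r)) (s (oddSite L r + 1)))
    (hs''even : ∀ r : ZMod L, s'' (evenSite L r) = s (evenSite L r)) :
    ∀ r : ZMod L, s'' (evenSite L r) = a (r - 1) ∧ s'' (oddSite L r) = a (r - 1) := by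
  haveI : NeZero L := ⟨by omega⟩
  intro r
  have h1 : oddSite L r - 1 = evenSite L r := by
    simp [oddSite, evenSite]
  have h2 : oddSite L r + 1 = evenSite L (r + 1) := by
    simp only [oddSite, evenSite]
    have hmod : (r + 1).val ≡ r.val + 1 [MOD L] := by
      rw [← ZMod.natCast_eq_natCast_iff]
      push_cast
      simp [ZMod.natCast_val, ZMod.cast_id]
    have hm2 := hmod.mul_left' (c := 2)
    have key : ((2 * r.val + 1 : ℕ) : ZMod (2 * L)) + 1
        = ((2 * (r.val + 1) : ℕ) : ZMod (2 * L)) := by push_cast; ring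
    rw [key, ZMod.natCast_eq_natCast_iff]
    exact hm2.symm
  refine ⟨(hs''even r).trans (hs r).1, ?_⟩
  rw [hs''odd r, h1, h2, (hs r).1, (hs r).2, (hs (r + 1)).1]
  simp only [add_sub_cancel_right, chi]
  have h0 := ha (r - 1)
  rw [sub_add_cancel] at h0
  ring_nf
  have h0' : a (-1 + r) * a r = 0 := by rw [neg_add_eq_sub]; exact h0
  have two0 : (2 : ZMod 2) = 0 := rfl
  linear_combination h0' + a r * two0
end

section
/- Let L ≥ 1 and let T be the cyclic-shift map on functions a : ZMod L → ZMod 2 given by (T a)(r) = a(r−1). The composite Rule-54 Floquet map (odd layer after even layer), restricted to even-dimer configurations built from hard-core a (i.e., a(r)·a(r+1) = 0 for all r), sends the even-dimer encoding of a to the even-dimer encoding of T a. -/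
/-- The even Rule-54 layer: simultaneously updates all even-indexed sites. -/
def evenLayer (L : ℕ) (s : ZMod (2 * L) → ZMod 2) : ZMod (2 * L) → ZMod 2 :=
  fun c => if c.val % 2 = 0 then chi (s (c - 1)) (s c) (s (c + 1)) else s c

/-- The odd Rule-54 layer: simultaneously updates all odd-indexed sites. -/
def oddLayer (L : ℕ) (s : ZMod (2 * L) → ZMod 2) : ZMod (2 * L) → ZMod 2 :=
  fun c => if c.val % 2 = 1 then chi (s (c - 1)) (s c) (s (c + 1)) else s c

/-- The even-dimer encoding of a coarse-grained configuration: `s (2r) = s (2r+1) = a r`. -/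
def evenDimer (L : ℕ) (a : ZMod L → ZMod 2) : ZMod (2 * L) → ZMod 2 :=
  fun c => a ((c.val / 2 : ℕ) : ZMod L)

theorem chi_eq_left_of_mul_eq_zero {x y : ZMod 2} (h : x * y = 0) : chi x y y = x := by
  rw [chi, h, add_zero, add_assoc, CharTwo.add_self_eq_zero, add_zero]

theorem ZMod.val_natCast_mod_of_dvd {n d : ℕ} (h : d ∣ n) (k : ℕ) :
    (k : ZMod n).val % d = k % d := by
  rw [ZMod.val_natCast, Nat.mod_mod_of_dvd _ h]

theorem Nat.cast_succ_sub_one {R : Type*} [AddGroupWithOne R] (n : ℕ) :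
    ((n + 1 : ℕ) : R) - 1 = n := by
  rw [Nat.cast_succ, add_sub_cancel_right]

/-- Lets `c - 1`, ..., `c - k` all be handled as casts of naturals. -/
theorem ZMod.exists_eq_natCast_add {n : ℕ} [NeZero n] (c : ZMod n) (k : ℕ) :
    ∃ m : ℕ, c = ((m + k : ℕ) : ZMod n) := by
  obtain ⟨n', rfl⟩ := Nat.exists_eq_succ_of_ne_zero (NeZero.ne n)
  refine ⟨c.val + n' * k, ?_⟩
  have hm : c.val + n' * k + k = c.val + (n' + 1) * k := by ring
  rw [hm, Nat.cast_add, ZMod.natCast_zmod_val, Nat.cast_mul, ZMod.natCast_self, zero_mul,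
    add_zero]

section Rule54

variable {L : ℕ}

theorem val_natCast_mod_two (k : ℕ) : (k : ZMod (2 * L)).val % 2 = k % 2 :=
  ZMod.val_natCast_mod_of_dvd (dvd_mul_right 2 L) k

theorem evenDimer_natCast (a : ZMod L → ZMod 2) (k : ℕ) :
    evenDimer L a k = a ((k / 2 : ℕ) : ZMod L) := by
  rw [evenDimer, ZMod.val_natCast, Nat.mod_mul_right_div_self, ZMod.natCast_mod]

theorem oddLayer_comp_sub_one [NeZero L] (s : ZMod (2 * L) → ZMod 2) :
    oddLayer L (fun c => s (c - 1)) = fun c => evenLayer L s (c - 1) := by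
  funext c
  obtain ⟨n, rfl⟩ := ZMod.exists_eq_natCast_add c 1
  simp only [oddLayer, evenLayer]
  rw [add_sub_cancel_right, Nat.cast_succ_sub_one, val_natCast_mod_two, val_natCast_mod_two]
  by_cases hn : n % 2 = 0
  · rw [if_pos (by omega), if_pos hn, Nat.cast_succ]
  · rw [if_neg (by omega), if_neg hn]

theorem evenLayer_evenDimer [NeZero L] {a : ZMod L → ZMod 2} (ha : ∀ r, a r * a (r + 1) = 0) :
    evenLayer L (evenDimer L a) = fun c => evenDimer L a (c - 1) := by
  funext c
  obtain ⟨n, rfl⟩ := ZMod.exists_eq_natCast_add c 1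
  have hsucc : ((n + 1 : ℕ) : ZMod (2 * L)) + 1 = ((n + 2 : ℕ) : ZMod (2 * L)) := by
    push_cast; ring
  simp only [evenLayer]
  rw [hsucc, Nat.cast_succ_sub_one, val_natCast_mod_two, evenDimer_natCast, evenDimer_natCast,
    evenDimer_natCast]
  by_cases hn : n % 2 = 0
  · rw [if_neg (by omega), show (n + 1) / 2 = n / 2 by omega]
  · rw [if_pos (by omega), show (n + 1) / 2 = n / 2 + 1 by omega,
      show (n + 2) / 2 = n / 2 + 1 by omega, Nat.cast_succ]
    exact chi_eq_left_of_mul_eq_zero (ha _)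

theorem evenDimer_sub_two [NeZero L] (a : ZMod L → ZMod 2) :
    (fun c => evenDimer L a (c - 1 - 1)) = evenDimer L (fun r => a (r - 1)) := by
  funext c
  obtain ⟨n, rfl⟩ := ZMod.exists_eq_natCast_add c 2
  have hsub : ((n + 2 : ℕ) : ZMod (2 * L)) - 1 - 1 = n := by push_cast; ring
  rw [hsub, evenDimer_natCast, evenDimer_natCast, show (n + 2) / 2 = n / 2 + 1 by omega,
    Nat.cast_succ, add_sub_cancel_right]

end Rule54

/-- One Rule-54 Floquet period (odd layer after even layer) acts on even-dimer
hard-core configurations as the coarse-grained cyclic shift `(T a) r = a (r - 1)`. -/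
theorem rule54_floquet_translation (L : ℕ) (hL : 1 ≤ L)
    (a : ZMod L → ZMod 2) (ha : ∀ r, a r * a (r + 1) = 0) :
    oddLayer L (evenLayer L (evenDimer L a)) = evenDimer L (fun r => a (r - 1)) := by
  have : NeZero L := ⟨by omega⟩
  rw [evenLayer_evenDimer ha, oddLayer_comp_sub_one, evenLayer_evenDimer ha]
  exact evenDimer_sub_two a
end

section
/- For 1 ≤ k ≤ ⌊L/2⌋, the number of k-element subsets of ZMod L with no two cyclically adjacent elements equals (L/(L−k)) · binomial(L−k, k), which equals (L/k) · binomial(L−k−1, k−1). -/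
/-!
Double count the pairs `(S, r)` with `r ∈ S`. By rotation every point of `ZMod L` lies in the
same number of hard-core `k`-sets; those containing `L - 2` are `{L - 2} ∪ T` with `T` an
independent `(k - 1)`-set of the path `0, …, L - 4`, and independent `j`-sets of a path on `n`
vertices are counted by `C(n + 1 - j, j)` through the recurrence obtained by deciding whether the
last vertex is used. Hence `#sets · k = L · C(L - k - 1, k - 1)`, and the second expression is
the first one rewritten with `(L - k) · C(L - k - 1, k - 1) = k · C(L - k, k)`.
-/

open Finset

def pathIndepSets (n j : ℕ) : Finset (Finset ℕ) :=
  {S ∈ powersetCard j (range n) | ∀ a ∈ S, a + 1 ∉ S}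

lemma mem_pathIndepSets {n j : ℕ} {S : Finset ℕ} :
    S ∈ pathIndepSets n j ↔ S ⊆ range n ∧ #S = j ∧ ∀ a ∈ S, a + 1 ∉ S := by
  simp [pathIndepSets, and_assoc]

lemma filter_notMem_pathIndepSets_succ (n j : ℕ) :
    {S ∈ pathIndepSets (n + 1) j | n ∉ S} = pathIndepSets n j := by
  ext S
  simp only [mem_filter, mem_pathIndepSets, subset_iff, mem_range]
  grind

lemma card_filter_mem_pathIndepSets_succ (n j : ℕ) :
    #{S ∈ pathIndepSets (n + 1) (j + 1) | n ∈ S} = #(pathIndepSets (n - 1) j) := by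
  refine card_nbij' (·.erase n) (insert n) ?_ ?_ ?_ ?_
  · intro S
    simp only [coe_filter, mem_pathIndepSets, mem_coe, subset_iff, mem_range]
    grind
  · intro T
    simp only [coe_filter, mem_pathIndepSets, mem_coe, subset_iff, mem_range]
    grind
  · intro S hS
    exact insert_erase (mem_filter.1 hS).2
  · intro T hT
    exact erase_insert fun h => (mem_range.1 ((mem_pathIndepSets.1 hT).1 h)).not_ge (n.sub_le 1)

lemma card_pathIndepSets_succ_succ (n j : ℕ) :
    #(pathIndepSets (n + 1) (j + 1)) = #(pathIndepSets n (j + 1)) + #(pathIndepSets (n - 1) j) := by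
  rw [← card_filter_add_card_filter_not (p := (n ∈ ·)), card_filter_mem_pathIndepSets_succ,
    filter_notMem_pathIndepSets_succ, add_comm]

lemma Nat.choose_sub_succ_add_choose_sub (n j : ℕ) :
    (n + 1 - j).choose (j + 1) + (n + 1 - j).choose j = (n + 2 - j).choose (j + 1) := by
  rcases le_or_gt j (n + 1) with hj | hj
  · rw [show n + 2 - j = n + 1 - j + 1 by omega, Nat.choose_succ_succ', add_comm]
  · simp [show n + 1 - j = 0 by omega, show n + 2 - j = 0 by omega,
      Nat.choose_eq_zero_of_lt (show 0 < j by omega)]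

theorem card_pathIndepSets : ∀ n j, #(pathIndepSets n j) = (n + 1 - j).choose j
  | n, 0 => by simp [pathIndepSets, filter_singleton]
  | 0, j + 1 => by simp [pathIndepSets]
  | 1, 1 => by decide
  | 1, j + 2 => by simp [pathIndepSets]
  | n + 2, j + 1 => by
    rw [card_pathIndepSets_succ_succ, card_pathIndepSets (n + 1) (j + 1), Nat.add_sub_cancel,
      card_pathIndepSets n j, Nat.add_sub_add_right, Nat.add_sub_add_right]
    exact Nat.choose_sub_succ_add_choose_sub n j

namespace ZMod

variable {L : ℕ}

lemma natCast_inj_of_lt {a b : ℕ} (ha : a < L) (hb : b < L) : (a : ZMod L) = b ↔ a = b := by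
  rw [natCast_eq_natCast_iff', Nat.mod_eq_of_lt ha, Nat.mod_eq_of_lt hb]

lemma natCast_mem_image_natCast_iff {U : Finset ℕ} {b : ℕ} (hU : ∀ a ∈ U, a < L) (hb : b < L) :
    (b : ZMod L) ∈ U.image (↑) ↔ b ∈ U := by
  refine ⟨fun h => ?_, mem_image_of_mem _⟩
  obtain ⟨a, ha, hab⟩ := mem_image.1 h
  exact (natCast_inj_of_lt (hU a ha) hb).1 hab ▸ ha

/-- Away from the wrap-around edge `L - 1 → 0`, the cycle looks like a path. -/
lemma image_natCast_indep_iff {U : Finset ℕ} (hU : ∀ a ∈ U, a + 1 < L) :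
    (∀ r ∈ U.image ((↑) : ℕ → ZMod L), r + 1 ∉ U.image ((↑) : ℕ → ZMod L)) ↔
      ∀ a ∈ U, a + 1 ∉ U := by
  rw [forall_mem_image]
  refine forall₂_congr fun a ha => ?_
  rw [← Nat.cast_succ, natCast_mem_image_natCast_iff (fun b hb => by grind) (hU a ha)]

end ZMod

section Cycle

variable {L k : ℕ} [NeZero L]

def cycleIndepSets (L k : ℕ) [NeZero L] : Finset (Finset (ZMod L)) :=
  {S | (∀ r ∈ S, r + 1 ∉ S) ∧ #S = k}

lemma mem_cycleIndepSets {S : Finset (ZMod L)} :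
    S ∈ cycleIndepSets L k ↔ (∀ r ∈ S, r + 1 ∉ S) ∧ #S = k := by
  simp [cycleIndepSets]

lemma map_addRight_mem_cycleIndepSets {S : Finset (ZMod L)} (d : ZMod L) :
    S.map (Equiv.addRight d).toEmbedding ∈ cycleIndepSets L k ↔ S ∈ cycleIndepSets L k := by
  simp only [mem_cycleIndepSets, mem_map_equiv, card_map, Equiv.addRight_symm_apply]
  refine and_congr_left' ⟨fun h r hr => ?_, fun h r hr => ?_⟩
  · simpa [add_right_comm r d 1] using h (r + d) (by simpa)
  · simpa [add_right_comm r (-d) 1] using h _ hr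

lemma card_filter_mem_cycleIndepSets (r c : ZMod L) :
    #{S ∈ cycleIndepSets L k | r ∈ S} = #{S ∈ cycleIndepSets L k | c ∈ S} := by
  refine card_nbij' (·.map (Equiv.addRight (c - r)).toEmbedding)
    (·.map (Equiv.addRight (r - c)).toEmbedding) ?_ ?_ ?_ ?_
  · intro S; simp [map_addRight_mem_cycleIndepSets]
  · intro S; simp [map_addRight_mem_cycleIndepSets]
  · intro S _; ext; simp [add_assoc]
  · intro S _; ext; simp [add_assoc]

lemma card_filter_mem_cycleIndepSets_natCast (n j : ℕ) :
    #{S ∈ cycleIndepSets (n + 2) (j + 1) | (n : ZMod (n + 2)) ∈ S} =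
      #{U ∈ pathIndepSets (n + 1) (j + 1) | n ∈ U} := by
  refine card_nbij' (·.image ZMod.val) (·.image (↑)) ?_ ?_ ?_ ?_
  · intro S
    simp only [coe_filter, Set.mem_ofPred, mem_cycleIndepSets, mem_pathIndepSets, subset_iff,
      mem_range]
    rintro ⟨⟨hind, hcard⟩, hn⟩
    have hS : (S.image ZMod.val).image (↑) = S := by simp [image_image, Function.comp_def]
    have hU : ∀ a ∈ S.image ZMod.val, a < n + 1 := by
      simp only [forall_mem_image]
      intro s hs
      have hne : s ≠ (n : ZMod (n + 2)) + 1 := fun h => hind _ hn (h ▸ hs)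
      have : s.val ≠ n + 1 := fun h => hne (by rw [← ZMod.natCast_zmod_val s, h, Nat.cast_succ])
      have := ZMod.val_lt s
      omega
    refine ⟨⟨hU, ?_, ?_⟩, ?_⟩
    · rw [card_image_of_injective _ (ZMod.val_injective _), hcard]
    · rw [← ZMod.image_natCast_indep_iff (L := n + 2) (by grind), hS]
      exact hind
    · simpa [ZMod.val_cast_of_lt (Nat.lt_add_of_pos_right two_pos)] using
        mem_image_of_mem ZMod.val hn
  · intro U
    simp only [coe_filter, Set.mem_ofPred, mem_cycleIndepSets, mem_pathIndepSets, subset_iff,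
      mem_range]
    rintro ⟨⟨hU, hcard, hind⟩, hn⟩
    refine ⟨⟨(ZMod.image_natCast_indep_iff (by grind)).2 hind, ?_⟩, mem_image_of_mem _ hn⟩
    rw [card_image_of_injOn fun a ha b hb h =>
      (ZMod.natCast_inj_of_lt (by grind) (by grind)).1 h, hcard]
  · intro S _
    simp [image_image, Function.comp_def]
  · intro U hU
    simp only [mem_coe, mem_filter, mem_pathIndepSets, subset_iff, mem_range] at hU
    simp only [image_image]
    exact (image_congr fun a ha => ZMod.val_cast_of_lt (by grind)).trans image_id

lemma card_cycleIndepSets_mul (hL : 2 ≤ L) (hk : 1 ≤ k) :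
    #(cycleIndepSets L k) * k = L * (L - k - 1).choose (k - 1) := by
  obtain ⟨n, rfl⟩ : ∃ n, L = n + 2 := ⟨L - 2, by omega⟩
  obtain ⟨j, rfl⟩ : ∃ j, k = j + 1 := ⟨k - 1, by omega⟩
  have hfiber (r : ZMod (n + 2)) :
      #{S ∈ cycleIndepSets (n + 2) (j + 1) | r ∈ S} = (n - j).choose j := by
    rw [card_filter_mem_cycleIndepSets r n, card_filter_mem_cycleIndepSets_natCast,
      card_filter_mem_pathIndepSets_succ, card_pathIndepSets]
    rcases n with _ | n
    · cases j <;> simp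
    · simp
  have hcard (S : Finset (ZMod (n + 2))) (hS : S ∈ cycleIndepSets (n + 2) (j + 1)) :
      #(univ.bipartiteAbove (fun S r => r ∈ S) S) = j + 1 := by
    simp [bipartiteAbove, (mem_cycleIndepSets.1 hS).2]
  rw [show n + 2 - (j + 1) - 1 = n - j by omega, Nat.add_sub_cancel]
  simpa using card_mul_eq_card_mul _ hcard fun r _ => hfiber r

end Cycle

theorem hardcore_fixed_number_count_general (L k : ℕ) [NeZero L]
    (hk1 : 1 ≤ k) (hk2 : k ≤ L / 2) :
    ((Fintype.card {S : Finset (ZMod L) // (∀ r ∈ S, r + 1 ∉ S) ∧ S.card = k}) : ℚ) =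
        ((L : ℚ) / ((L : ℚ) - (k : ℚ))) * (Nat.choose (L - k) k : ℚ) ∧
      ((L : ℚ) / ((L : ℚ) - (k : ℚ))) * (Nat.choose (L - k) k : ℚ) =
        ((L : ℚ) / (k : ℚ)) * (Nat.choose (L - k - 1) (k - 1) : ℚ) := by
  have hkL : k < L := by omega
  have hcount := card_cycleIndepSets_mul (L := L) (by omega) hk1
  have habsorb : (L - k) * (L - k - 1).choose (k - 1) = (L - k).choose k * k := by
    have := Nat.add_one_mul_choose_eq (L - k - 1) (k - 1)
    rwa [Nat.sub_add_cancel (by omega : 1 ≤ L - k), Nat.sub_add_cancel hk1] at this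
  rw [Fintype.card_subtype]
  change (#(cycleIndepSets L k) : ℚ) = _ ∧ _
  have hk0 : (k : ℚ) ≠ 0 := by positivity
  have hLk : (L : ℚ) - k ≠ 0 := sub_ne_zero.2 (by exact_mod_cast hkL.ne')
  qify [hkL.le] at hcount habsorb
  have hformulas :
      (L : ℚ) / (L - k) * (L - k).choose k = L / k * (L - k - 1).choose (k - 1) := by
    rw [div_mul_eq_mul_div, div_mul_eq_mul_div, div_eq_div_iff hLk hk0]
    linear_combination -(L : ℚ) * habsorb
  refine ⟨?_, hformulas⟩
  rw [hformulas, div_mul_eq_mul_div, eq_div_iff hk0]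
  exact hcount

/-- The number of `k`-element hard-core subsets of the cycle `ZMod L` is
`(L/(L-k))·C(L-k,k) = (L/k)·C(L-k-1,k-1)`. -/
theorem hardcore_fixed_number_count (L k : ℕ) [NeZero L] (hL : 2 ≤ L)
    (hk1 : 1 ≤ k) (hk2 : k ≤ L / 2) :
    ((Fintype.card {S : Finset (ZMod L) // (∀ r ∈ S, r + 1 ∉ S) ∧ S.card = k}) : ℚ) =
        ((L : ℚ) / ((L : ℚ) - (k : ℚ))) * (Nat.choose (L - k) k : ℚ) ∧
      ((L : ℚ) / ((L : ℚ) - (k : ℚ))) * (Nat.choose (L - k) k : ℚ) =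
        ((L : ℚ) / (k : ℚ)) * (Nat.choose (L - k - 1) (k - 1) : ℚ) :=
  hardcore_fixed_number_count_general L k hk1 hk2
end

section
/- Let s : ZMod (2L) → {0,1} be a configuration such that for every r, the odd-centered triple (s(2r), s(2r+1), s(2r+2)) belongs to {(0,0,0),(0,0,1),(1,1,0)} and the even-centered triple (s(2r−1), s(2r), s(2r+1)) belongs to {(0,0,0),(1,0,0),(0,1,1)}. Then s(2r) = s(2r+1) for all r, and the configuration a(r) := s(2r) satisfies the hard-core constraint a(r)·a(r+1) = 0 for all r. -/
/-- The locally allowed-pattern conditions of the even-sector projectors exactly force a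
configuration into the even-dimer hard-core form: `s (2r) = s (2r+1)` for all `r`, and
`a r := s (2r)` satisfies the hard-core constraint. -/
theorem allowed_patterns_force_hardcore (L : ℕ) (hL : 1 ≤ L)
    (s : ZMod (2 * L) → ZMod 2)
    (hodd : ∀ r : ZMod L,
      (s (evenSite L r), s (oddSite L r), s (evenSite L (r + 1))) = ((0 : ZMod 2), (0 : ZMod 2), (0 : ZMod 2)) ∨
      (s (evenSite L r), s (oddSite L r), s (evenSite L (r + 1))) = ((0 : ZMod 2), (0 : ZMod 2), (1 : ZMod 2)) ∨
      (s (evenSite L r), s (oddSite L r), s (evenSite L (r + 1))) = ((1 : ZMod 2), (1 : ZMod 2), (0 : ZMod 2)))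
    (heven : ∀ r : ZMod L,
      (s (oddSite L (r - 1)), s (evenSite L r), s (oddSite L r)) = ((0 : ZMod 2), (0 : ZMod 2), (0 : ZMod 2)) ∨
      (s (oddSite L (r - 1)), s (evenSite L r), s (oddSite L r)) = ((1 : ZMod 2), (0 : ZMod 2), (0 : ZMod 2)) ∨
      (s (oddSite L (r - 1)), s (evenSite L r), s (oddSite L r)) = ((0 : ZMod 2), (1 : ZMod 2), (1 : ZMod 2))) :
    (∀ r : ZMod L, s (evenSite L r) = s (oddSite L r)) ∧
      ∀ r : ZMod L, s (evenSite L r) * s (evenSite L (r + 1)) = 0 := by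
  constructor
  · intro r
    rcases hodd r with h | h | h <;>
      simp only [Prod.mk.injEq] at h <;> rw [h.1, h.2.1]
  · intro r
    rcases hodd r with h | h | h <;>
      simp only [Prod.mk.injEq] at h <;> simp [h.1, h.2.2]
end
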